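/- Weak soundness of F-local isomorphic rewriting: let R = (V,F,𝓡) with 𝓡 = {ℓ₁→r₁,…,ℓₙ→rₙ} and let φ = (φ₁,…,φₙ) be a family of term isomorphisms with φ(𝓡) = {φ₁(ℓ₁)→φ₁(r₁),…,φₙ(ℓₙ)→φₙ(rₙ)}. If s →_R t, then there exists an index i (namely one for which rule ℓᵢ → rᵢ is applied in the step) such that φᵢ(s) →_{φ(R)} φᵢ(t). Conversely, if φᵢ(s) rewrites to φᵢ(t) using only the single rule φᵢ(ℓᵢ) → φᵢ(rᵢ), then s →_R t. -/

import Mathlib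

set_option autoImplicit false

universe u
variable {F V F' V' F'' V'' : Type}

inductive Term (F V : Type) : Type where
  | var : V → Term F V
  | app : F → List (Term F V) → Term F V

namespace Term

def map (φF : F → F') (φV : V → V') : Term F V → Term F' V'
  | var x => var (φV x)
  | app f ts => app (φF f) (ts.attach.map fun t => map φF φV t.1)

decreasing_by
  have := List.sizeOf_lt_of_mem t.2
  simp_wf
  omega

def subst (σ : V → Term F V) : Term F V → Term F V
  | var x => σ x
  | app f ts => app f (ts.attach.map fun t => subst σ t.1)

decreasing_by
  have := List.sizeOf_lt_of_mem t.2
  simp_wf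
  omega

def vars : Term F V → Set V
  | var x => {x}
  | app _ ts => {v | ∃ t ∈ ts.attach, v ∈ vars t.1}

decreasing_by
  have := List.sizeOf_lt_of_mem t.2
  simp_wf
  omega

end Term

inductive Ctx (F V : Type) : Type where
  | hole : Ctx F V
  | app : F → List (Term F V) → Ctx F V → List (Term F V) → Ctx F V

def Ctx.fill : Ctx F V → Term F V → Term F V
  | .hole, t => t
  | .app f pre C post, t => .app f (pre ++ [C.fill t] ++ post)

def Ctx.map (φF : F → F') (φV : V → V') : Ctx F V → Ctx F' V'
  | .hole => .hole
  | .app f pre C post => .app (φF f) (pre.map (Term.map φF φV)) (C.map φF φV) (post.map (Term.map φF φV))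

abbrev Rule (F V : Type) := Term F V × Term F V

def ruleMap (φF : F → F') (φV : V → V') (p : Rule F V) : Rule F' V' :=
  (p.1.map φF φV, p.2.map φF φV)

def Rewrites (𝓡 : Set (Rule F V)) (s t : Term F V) : Prop :=
  ∃ (C : Ctx F V) (σ : V → Term F V) (p : Rule F V),
    p ∈ 𝓡 ∧ s = C.fill (p.1.subst σ) ∧ t = C.fill (p.2.subst σ)

def IsTermIso (ar : F → ℕ) (ar' : F' → ℕ) (φF : F → F') (φV : V → V') : Prop :=
  Function.Bijective φF ∧ Function.Bijective φV ∧ ∀ f, ar' (φF f) = ar f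

def IsTRS (ar : F → ℕ) (𝓡 : Set (Rule F V)) : Prop :=
  𝓡.Finite ∧ ∀ p ∈ 𝓡, (∀ x, p.1 ≠ Term.var x) ∧ p.2.vars ⊆ p.1.vars

/-!
A term isomorphism commutes with filling contexts and with substitution, provided the
substitution is transported along the inverse variable renaming; hence it maps each rewrite
step with a rule to a step with the image rule, and its inverse maps such steps back. For the
first claim one uses the isomorphism attached to the rule applied in the given step.
-/

@[elab_as_elim]
theorem Term.induction {motive : Term F V → Prop} (var : ∀ x, motive (.var x))
    (app : ∀ f ts, (∀ t ∈ ts, motive t) → motive (.app f ts)) : ∀ t, motive t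
  | .var x => var x
  | .app f ts => app f ts fun t _ => Term.induction var app t
decreasing_by
  have := List.sizeOf_lt_of_mem (by assumption : t ∈ ts)
  simp_wf
  omega

namespace Term

@[simp] theorem map_var (φF : F → F') (φV : V → V') (x : V) :
    (var x : Term F V).map φF φV = var (φV x) := by
  rw [map]

@[simp] theorem map_app (φF : F → F') (φV : V → V') (f : F) (ts : List (Term F V)) :
    (app f ts).map φF φV = app (φF f) (ts.map (map φF φV)) := by
  rw [map, List.map_attach_eq_pmap]
  simp

@[simp] theorem subst_var (σ : V → Term F V) (x : V) : (var x).subst σ = σ x := by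
  rw [subst]

@[simp] theorem subst_app (σ : V → Term F V) (f : F) (ts : List (Term F V)) :
    (app f ts).subst σ = app f (ts.map (subst σ)) := by
  rw [subst, List.map_attach_eq_pmap]
  simp

theorem map_leftInverse {φF : F → F'} {φV : V → V'} {ψF : F' → F} {ψV : V' → V}
    (hF : Function.LeftInverse ψF φF) (hV : Function.LeftInverse ψV φV) :
    Function.LeftInverse (map ψF ψV) (map φF φV) := by
  intro t
  induction t using Term.induction with
  | var x => simp [hV x]
  | app f ts ih =>
    simp only [map_app, List.map_map, hF f, app.injEq, true_and]
    exact (List.map_congr_left fun t ht => ih t ht).trans (List.map_id ts)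

theorem map_subst (φF : F → F') {φV : V → V'} {ψV : V' → V}
    (hV : Function.LeftInverse ψV φV) (σ : V → Term F V) (t : Term F V) :
    (t.subst σ).map φF φV = (t.map φF φV).subst fun y => (σ (ψV y)).map φF φV := by
  induction t using Term.induction with
  | var x => simp [hV x]
  | app f ts ih =>
    simp only [map_app, subst_app, List.map_map, app.injEq, true_and]
    exact List.map_congr_left fun t ht => ih t ht

end Term

theorem Ctx.map_fill (φF : F → F') (φV : V → V') (C : Ctx F V) (t : Term F V) :
    (C.fill t).map φF φV = (C.map φF φV).fill (t.map φF φV) := by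
  induction C with
  | hole => rfl
  | app f pre C post ih => simp [Ctx.fill, Ctx.map, ih]

theorem ruleMap_leftInverse {φF : F → F'} {φV : V → V'} {ψF : F' → F} {ψV : V' → V}
    (hF : Function.LeftInverse ψF φF) (hV : Function.LeftInverse ψV φV) :
    Function.LeftInverse (ruleMap ψF ψV) (ruleMap φF φV) := fun p => by
  simp only [ruleMap, Term.map_leftInverse hF hV _]

namespace Rewrites

variable {𝓡 𝓢 : Set (Rule F V)} {s t : Term F V}

theorem mono (h𝓡𝓢 : 𝓡 ⊆ 𝓢) : Rewrites 𝓡 s t → Rewrites 𝓢 s t :=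
  fun ⟨C, σ, p, hp, hs, ht⟩ => ⟨C, σ, p, h𝓡𝓢 hp, hs, ht⟩

theorem exists_rule : Rewrites 𝓡 s t → ∃ p ∈ 𝓡, Rewrites {p} s t :=
  fun ⟨C, σ, p, hp, hs, ht⟩ => ⟨p, hp, C, σ, p, rfl, hs, ht⟩

theorem map (φF : F → F') {φV : V → V'} {ψV : V' → V} (hV : Function.LeftInverse ψV φV) :
    Rewrites 𝓡 s t → Rewrites (ruleMap φF φV '' 𝓡) (s.map φF φV) (t.map φF φV) := by
  rintro ⟨C, σ, p, hp, rfl, rfl⟩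
  refine ⟨C.map φF φV, fun y => (σ (ψV y)).map φF φV, ruleMap φF φV p, ⟨p, hp, rfl⟩, ?_, ?_⟩ <;>
    simp only [Ctx.map_fill, ruleMap, Term.map_subst φF hV]

theorem map_iff {φF : F → F'} {φV : V → V'} (hF : φF.Bijective) (hV : φV.Bijective) :
    Rewrites (ruleMap φF φV '' 𝓡) (s.map φF φV) (t.map φF φV) ↔ Rewrites 𝓡 s t := by
  obtain ⟨ψF, hψF, -⟩ := Function.bijective_iff_has_inverse.1 hF
  obtain ⟨ψV, hψV, hφV⟩ := Function.bijective_iff_has_inverse.1 hV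
  refine ⟨fun h => ?_, map φF hψV⟩
  have hback := h.map ψF hφV
  rwa [(ruleMap_leftInverse hψF hψV).image_image,
    Term.map_leftInverse hψF hψV s, Term.map_leftInverse hψF hψV t] at hback

end Rewrites

theorem weak_soundness_F_local_rewriting_general
    {F V F' V' : Type} (ar : F → ℕ) (ar' : F' → ℕ)
    (𝓡 : Set (Rule F V))
    (ΦF : Rule F V → F → F') (ΦV : Rule F V → V → V')
    (hiso : ∀ p ∈ 𝓡, IsTermIso ar ar' (ΦF p) (ΦV p)) :
    (∀ s t : Term F V, Rewrites 𝓡 s t →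
       ∃ p ∈ 𝓡, Rewrites ((fun q => ruleMap (ΦF q) (ΦV q) q) '' 𝓡)
         (Term.map (ΦF p) (ΦV p) s) (Term.map (ΦF p) (ΦV p) t)) ∧
    (∀ p ∈ 𝓡, ∀ s t : Term F V,
       Rewrites {ruleMap (ΦF p) (ΦV p) p}
         (Term.map (ΦF p) (ΦV p) s) (Term.map (ΦF p) (ΦV p) t) →
       Rewrites 𝓡 s t) := by
  refine ⟨fun s t hst => ?_, fun p hp s t hst => ?_⟩
  · obtain ⟨p, hp, hstep⟩ := hst.exists_rule
    obtain ⟨hF, hV, -⟩ := hiso p hp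
    refine ⟨p, hp, ((Rewrites.map_iff hF hV).2 hstep).mono ?_⟩
    rw [Set.image_singleton, Set.singleton_subset_iff]
    exact ⟨p, hp, rfl⟩
  · obtain ⟨hF, hV, -⟩ := hiso p hp
    rw [← Set.image_singleton, Rewrites.map_iff hF hV] at hst
    exact hst.mono (Set.singleton_subset_iff.2 hp)

theorem weak_soundness_F_local_rewriting
    {F V F' V' : Type} (ar : F → ℕ) (ar' : F' → ℕ)
    (𝓡 : Set (Rule F V)) (hR : IsTRS ar 𝓡)
    (ΦF : Rule F V → F → F') (ΦV : Rule F V → V → V')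
    (hiso : ∀ p ∈ 𝓡, IsTermIso ar ar' (ΦF p) (ΦV p)) :
    (∀ s t : Term F V, Rewrites 𝓡 s t →
       ∃ p ∈ 𝓡, Rewrites ((fun q => ruleMap (ΦF q) (ΦV q) q) '' 𝓡)
         (Term.map (ΦF p) (ΦV p) s) (Term.map (ΦF p) (ΦV p) t)) ∧
    (∀ p ∈ 𝓡, ∀ s t : Term F V,
       Rewrites {ruleMap (ΦF p) (ΦV p) p}
         (Term.map (ΦF p) (ΦV p) s) (Term.map (ΦF p) (ΦV p) t) →
       Rewrites 𝓡 s t) :=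
  weak_soundness_F_local_rewriting_general ar ar' 𝓡 ΦF ΦV hiso
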